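/- Let V be a complex inner product space with two inner products ⟨·,·⟩₀ and ⟨·,·⟩_u, and let H be a subspace. Suppose x ∈ V satisfies ⟨x, h⟩₀ = 0 for all h ∈ H (x is ⟨·,·⟩₀-orthogonal to H). Write x = x₀ + v where x₀ ∈ H and ⟨v, h⟩_u = 0 for all h ∈ H (orthogonal decomposition with respect to ⟨·,·⟩_u). Then ⟨x₀, x₀⟩₀ ≤ ⟨v, v⟩₀. -/

import Mathlib

open scoped InnerProductSpace

theorem norm_sq_le_norm_sub_sq_of_inner_eq_zero {𝕜 E : Type*} [RCLike 𝕜] [NormedAddCommGroup E]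
    [InnerProductSpace 𝕜 E] {x y : E} (h : ⟪x, y⟫_𝕜 = 0) : ‖y‖ ^ 2 ≤ ‖x - y‖ ^ 2 := by
  have hpyth := norm_add_sq_eq_norm_sq_add_norm_sq_of_inner_eq_zero (𝕜 := 𝕜) x (-y)
    (by rw [inner_neg_right, h, neg_zero])
  rw [← sub_eq_add_neg, norm_neg] at hpyth
  nlinarith [mul_self_nonneg ‖x‖]

theorem stmt_1_general {V : Type*} [NormedAddCommGroup V] [InnerProductSpace ℂ V]
    (H : Submodule ℂ V) (x x₀ v : V)
    (hx₀ : x₀ ∈ H) (hdec : x = x₀ + v)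
    (horth₀ : ∀ h ∈ H, ⟪x, h⟫_ℂ = 0) :
    ‖x₀‖ ^ 2 ≤ ‖v‖ ^ 2 := by
  have hv : v = x - x₀ := by rw [hdec, add_sub_cancel_left]
  rw [hv]
  exact norm_sq_le_norm_sub_sq_of_inner_eq_zero (horth₀ x₀ hx₀)

/-- Lemma 3.1 in abstract form. Two inner products on the "same" space are
modeled by a linear equivalence `e : V ≃ₗ[ℂ] W` onto a second inner product
space: `⟪·,·⟫₀` is the inner product of `V` and `⟪x,y⟫_u := ⟪e x, e y⟫`.
If `x` is `⟪·,·⟫₀`-orthogonal to a subspace `H`, and `x = x₀ + v` with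
`x₀ ∈ H` and `v` `⟪·,·⟫_u`-orthogonal to `H`, then `⟨x₀,x₀⟩₀ ≤ ⟨v,v⟩₀`. -/
theorem stmt_1 {V W : Type*} [NormedAddCommGroup V] [InnerProductSpace ℂ V]
    [NormedAddCommGroup W] [InnerProductSpace ℂ W] (e : V ≃ₗ[ℂ] W)
    (H : Submodule ℂ V) (x x₀ v : V)
    (hx₀ : x₀ ∈ H) (hdec : x = x₀ + v)
    (horth₀ : ∀ h ∈ H, ⟪x, h⟫_ℂ = 0)
    (horthu : ∀ h ∈ H, ⟪e v, e h⟫_ℂ = 0) :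
    ‖x₀‖ ^ 2 ≤ ‖v‖ ^ 2 :=
  stmt_1_general H x x₀ v hx₀ hdec horth₀
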